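/- arXiv:1907.13211 — 3 statements merged into one kernel-verified Lean document; each statement's English description precedes it below -/
import Mathlib

section
/- With Q = ℝⁿ and constraints given by functions A^r_i(t,x,v), B^r(t,x,v) defining C_V(t,x,v) = {(δt, δx) : A^r_i δxⁱ + B^r δt = 0 ∀r}, suppose a curve x(t) ∈ ℝⁿ satisfies the Lagrange-d'Alembert conditions: (d/dt)(∂L/∂ẋⁱ) - ∂L/∂xⁱ = Σ_r λ_r A^r_i(t,x,ẋ) for some λ(t), together with the kinematic constraint Σᵢ A^r_i(t,x,ẋ) ẋⁱ + B^r(t,x,ẋ) = 0 for all r. Then the energy E_L(t,x,v) = ⟨∂L/∂v, v⟩ - L(t,x,v) satisfies the balance equation d/dt E_L(t,x,ẋ) = -Σ_r λ_r B^r(t,x,ẋ) - ∂L/∂t(t,x,ẋ) along the solution (assuming L, x, λ smooth). -/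
open scoped BigOperators

/-- Energy balance along solutions of the generalized Lagrange–d'Alembert equations
with time-dependent nonlinear constraints: if
`d/dt (∂L/∂vⁱ) = ∂L/∂xⁱ + ∑ᵣ λᵣ Aʳᵢ` and `∑ᵢ Aʳᵢ ẋⁱ + Bʳ = 0`, then
`d/dt E_L = -∑ᵣ λᵣ Bʳ - ∂L/∂t`, where `E_L = ⟨∂L/∂v, v⟩ - L`. -/
theorem stmt_4 {n m : ℕ}
    (L : ℝ × (Fin n → ℝ) × (Fin n → ℝ) → ℝ) (hL : ContDiff ℝ (⊤ : ℕ∞) L)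
    (A : Fin m → (ℝ × (Fin n → ℝ) × (Fin n → ℝ)) → Fin n → ℝ)
    (B : Fin m → (ℝ × (Fin n → ℝ) × (Fin n → ℝ)) → ℝ)
    (x v : ℝ → Fin n → ℝ) (lam : ℝ → Fin m → ℝ)
    (hx : ∀ i, ContDiff ℝ 2 (fun s => x s i))
    (hv : ∀ t i, HasDerivAt (fun s => x s i) (v t i) t)
    (hlam : ∀ r, Continuous fun s => lam s r)
    (hLdA : ∀ t i, HasDerivAt
      (fun s => fderiv ℝ L (s, x s, v s) (0, 0, Pi.single i 1))
      (fderiv ℝ L (t, x t, v t) (0, Pi.single i 1, 0)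
        + ∑ r, lam t r * A r (t, x t, v t) i) t)
    (hkin : ∀ t r, ∑ i, A r (t, x t, v t) i * v t i + B r (t, x t, v t) = 0) :
    ∀ t, HasDerivAt
      (fun s => (∑ i, fderiv ℝ L (s, x s, v s) (0, 0, Pi.single i 1) * v s i)
        - L (s, x s, v s))
      (-(∑ r, lam t r * B r (t, x t, v t))
        - fderiv ℝ L (t, x t, v t) (1, 0, 0)) t := by
  intro t
  -- v is C¹
  have hveq : ∀ i, (fun s => v s i) = deriv (fun s => x s i) := by
    intro i; funext s; exact ((hv s i).deriv).symm
  have hvC : ∀ i, ContDiff ℝ 1 (fun s => v s i) := by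
    intro i
    rw [hveq i]
    have h2 : ContDiff ℝ (1+1) (fun s => x s i) := by
      exact_mod_cast hx i
    exact (contDiff_succ_iff_deriv.mp h2).2.2
  set a : Fin n → ℝ := fun i => deriv (fun s => v s i) t with ha
  have hva : ∀ i, HasDerivAt (fun s => v s i) (a i) t := fun i =>
    ((hvC i).differentiable one_ne_zero t).hasDerivAt
  -- the curve
  have hc : HasDerivAt (fun s => (s, x s, v s)) ((1 : ℝ), v t, a) t :=
    (hasDerivAt_id t).prodMk
      ((hasDerivAt_pi.mpr fun i => hv t i).prodMk (hasDerivAt_pi.mpr hva))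
  set Φ := fderiv ℝ L (t, x t, v t) with hΦ
  have hLc : HasDerivAt (fun s => L (s, x s, v s)) (Φ ((1 : ℝ), v t, a)) t :=
    (hL.differentiable (by simp) _).hasFDerivAt.comp_hasDerivAt t hc
  have hsum : HasDerivAt
      (fun s => ∑ i, fderiv ℝ L (s, x s, v s) (0, 0, Pi.single i 1) * v s i)
      (∑ i, ((Φ (0, Pi.single i 1, 0) + ∑ r, lam t r * A r (t, x t, v t) i) * v t i
        + Φ (0, 0, Pi.single i 1) * a i)) t :=
    HasDerivAt.fun_sum fun i _ => (hLdA t i).fun_mul (hva i)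
  have hmain := hsum.fun_sub hLc
  convert hmain using 1
  case e'_4 => rfl
  case e'_5 => rfl
  -- decomposition of Φ (1, v t, a)
  have hdec1 : ((1 : ℝ), v t, a) = ((1:ℝ), 0, 0) + ((0:ℝ), v t, 0) + ((0:ℝ), 0, a) := by
    simp [Prod.ext_iff]
  have hdec2 : ((0:ℝ), v t, (0 : Fin n → ℝ))
      = ∑ i, v t i • (((0:ℝ), Pi.single i (1:ℝ), (0 : Fin n → ℝ)) : ℝ × (Fin n → ℝ) × (Fin n → ℝ)) := by
    refine Prod.ext ?_ (Prod.ext ?_ ?_)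
    · simp [Prod.fst_sum]
    · simp only [Prod.snd_sum, Prod.fst_sum, Prod.smul_mk, smul_zero]
      funext j
      simp [Finset.sum_apply, Pi.single_apply, mul_ite]
    · simp [Prod.snd_sum]
  have hdec3 : ((0:ℝ), (0 : Fin n → ℝ), a)
      = ∑ i, a i • (((0:ℝ), (0 : Fin n → ℝ), Pi.single i (1:ℝ)) : ℝ × (Fin n → ℝ) × (Fin n → ℝ)) := by
    refine Prod.ext ?_ (Prod.ext ?_ ?_)
    · simp [Prod.fst_sum]
    · simp [Prod.snd_sum, Prod.fst_sum]
    · simp only [Prod.snd_sum, Prod.smul_mk, smul_zero]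
      funext j
      simp [Finset.sum_apply, Pi.single_apply, mul_ite]
  have hterm2 : ∀ (i : Fin n) (c : ℝ),
      Φ ((0:ℝ), c • (Pi.single i 1 : Fin n → ℝ), (0 : Fin n → ℝ)) = c * Φ (0, Pi.single i 1, 0) := by
    intro i c
    have h : ((0:ℝ), c • (Pi.single i 1 : Fin n → ℝ), (0 : Fin n → ℝ))
        = c • (((0:ℝ), Pi.single i (1:ℝ), (0 : Fin n → ℝ)) : ℝ × (Fin n → ℝ) × (Fin n → ℝ)) := by
      simp
    rw [h, map_smul, smul_eq_mul]
  have hterm3 : ∀ (i : Fin n) (c : ℝ),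
      Φ ((0:ℝ), (0 : Fin n → ℝ), c • (Pi.single i 1 : Fin n → ℝ)) = c * Φ (0, 0, Pi.single i 1) := by
    intro i c
    have h : ((0:ℝ), (0 : Fin n → ℝ), c • (Pi.single i 1 : Fin n → ℝ))
        = c • (((0:ℝ), (0 : Fin n → ℝ), Pi.single i (1:ℝ)) : ℝ × (Fin n → ℝ) × (Fin n → ℝ)) := by
      simp
    rw [h, map_smul, smul_eq_mul]
  have hdecomp : Φ ((1 : ℝ), v t, a)
      = Φ (1, 0, 0) + (∑ i, v t i * Φ (0, Pi.single i 1, 0))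
        + ∑ i, a i * Φ (0, 0, Pi.single i 1) := by
    rw [hdec1, map_add, map_add, hdec2, hdec3, map_sum, map_sum]
    simp [hterm2, hterm3]
  -- the constraint rewrite
  have hswap : ∑ i, (∑ r, lam t r * A r (t, x t, v t) i) * v t i
      = -∑ r, lam t r * B r (t, x t, v t) := by
    simp only [Finset.sum_mul]
    rw [Finset.sum_comm, ← Finset.sum_neg_distrib]
    refine Finset.sum_congr rfl fun r _ => ?_
    have hk := hkin t r
    have h2 : ∑ i, A r (t, x t, v t) i * v t i = -B r (t, x t, v t) := by linarith
    calc ∑ i, lam t r * A r (t, x t, v t) i * v t i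
        = lam t r * ∑ i, A r (t, x t, v t) i * v t i := by
          rw [Finset.mul_sum]
          exact Finset.sum_congr rfl fun i _ => by ring
      _ = -(lam t r * B r (t, x t, v t)) := by rw [h2]; ring
  rw [hdecomp]
  simp only [add_mul, Finset.sum_add_distrib, hswap]
  simp only [mul_comm]
  abel
end

section
/- Consider the covariant Pontryagin bundle locally as 𝒫 = ℝ × ℝⁿ × ℝⁿ × ℝ × ℝⁿ with coordinates (t, x, v, 𝗉, p), the presymplectic form Ω_𝒫 = dxⁱ ∧ dpᵢ + dt ∧ d𝗉, the covariant generalized energy ℰ(t,x,v,𝗉,p) = 𝗉 + ⟨p, v⟩ - L(t,x,v), and the distribution Δ_𝒫(t,x,v,𝗉,p) = {(δt,δx,δv,δ𝗉,δp) : A^r_i(t,x,v)δxⁱ + B^r(t,x,v)δt = 0, r=1,...,m}. A section curve 𝗑(t) = (t, x(t), v(t), 𝗉(t), p(t)) satisfies i_{𝗑̇} Ω_𝒫 - dℰ(𝗑) ∈ Δ_𝒫(𝗑)° and 𝗑̇ ∈ Δ_𝒫(𝗑) if and only if there exist λ_r(t) such that: ẋ = v, pᵢ = ∂L/∂vⁱ,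 ṗᵢ - ∂L/∂xⁱ = Σ_r λ_r A^r_i, 𝗉̇ - ∂L/∂t = Σ_r λ_r B^r, and A^r_i ẋⁱ + B^r = 0 for all r. (Assume the covectors (A^r, B^r) are linearly independent at all points along the curve.) -/
open scoped BigOperators

/-- Auxiliary: the linear functional `(wt, wx) ↦ b * wt + ∑ i, a i * wx i`. -/
noncomputable def lfAux {n : ℕ} (a : Fin n → ℝ) (b : ℝ) : (ℝ × (Fin n → ℝ)) →ₗ[ℝ] ℝ :=
  b • LinearMap.fst ℝ ℝ (Fin n → ℝ)
    + ∑ i, a i • ((LinearMap.proj i).comp (LinearMap.snd ℝ ℝ (Fin n → ℝ)))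

lemma lfAux_apply {n : ℕ} (a : Fin n → ℝ) (b : ℝ) (z : ℝ × (Fin n → ℝ)) :
    lfAux a b z = b * z.1 + ∑ i, a i * z.2 i := by
  simp [lfAux, LinearMap.sum_apply]

/-- Coordinate description of the time-dependent Dirac dynamical system on the
covariant Pontryagin bundle `𝒫 = ℝ × ℝⁿ × ℝⁿ × ℝ × ℝⁿ` with the presymplectic form
`Ω_𝒫 = dxⁱ ∧ dpᵢ + dt ∧ d𝗉` and covariant generalized energy
`ℰ = 𝗉 + ⟨p,v⟩ - L(t,x,v)`: for a section curve with tangent `(1, dx, dv, d𝗉, dp)`,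
the conditions `i_𝗑̇Ω_𝒫 - dℰ ∈ Δ_𝒫°` and `𝗑̇ ∈ Δ_𝒫` hold iff there exist multipliers
`λᵣ` with `ẋ = v`, `p = ∂L/∂v`, `ṗ - ∂L/∂x = ∑ λᵣ Aʳ`, `𝗉̇ - ∂L/∂t = ∑ λᵣ Bʳ` and
`∑ᵢ Aʳᵢ ẋⁱ + Bʳ = 0`. -/
theorem stmt_5 {n m : ℕ}
    (L : ℝ × (Fin n → ℝ) × (Fin n → ℝ) → ℝ) (hL : Differentiable ℝ L)
    (A : Fin m → (ℝ × (Fin n → ℝ) × (Fin n → ℝ)) → Fin n → ℝ)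
    (B : Fin m → (ℝ × (Fin n → ℝ) × (Fin n → ℝ)) → ℝ)
    (t : ℝ) (x v : Fin n → ℝ) (P : ℝ) (p : Fin n → ℝ)
    (dx dv dp : Fin n → ℝ) (dP : ℝ)
    (hind : LinearIndependent ℝ
      (fun r : Fin m => ((B r (t, x, v), A r (t, x, v)) : ℝ × (Fin n → ℝ)))) :
    ((∀ (wt : ℝ) (wx wv wp : Fin n → ℝ) (wP : ℝ),
        (∀ r, ∑ i, A r (t, x, v) i * wx i + B r (t, x, v) * wt = 0) →
        (-dP + fderiv ℝ L (t, x, v) (1, 0, 0)) * wt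
          + (∑ i, (-(dp i) + fderiv ℝ L (t, x, v) (0, Pi.single i 1, 0)) * wx i)
          + (∑ i, (fderiv ℝ L (t, x, v) (0, 0, Pi.single i 1) - p i) * wv i)
          + 0 * wP
          + (∑ i, (dx i - v i) * wp i) = 0)
      ∧ (∀ r, ∑ i, A r (t, x, v) i * dx i + B r (t, x, v) * 1 = 0))
    ↔ ∃ lam : Fin m → ℝ,
        dx = v
        ∧ (∀ i, p i = fderiv ℝ L (t, x, v) (0, 0, Pi.single i 1))
        ∧ (∀ i, dp i - fderiv ℝ L (t, x, v) (0, Pi.single i 1, 0)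
            = ∑ r, lam r * A r (t, x, v) i)
        ∧ (dP - fderiv ℝ L (t, x, v) (1, 0, 0) = ∑ r, lam r * B r (t, x, v))
        ∧ (∀ r, ∑ i, A r (t, x, v) i * dx i + B r (t, x, v) = 0) := by
  constructor
  · rintro ⟨h1, h2⟩
    -- Step 1: dx = v
    have hdx : dx = v := by
      funext j
      have h := h1 0 0 0 (Pi.single j 1) 0 (by intro r; simp)
      simp [Pi.single_apply, mul_ite, Finset.sum_ite_eq'] at h
      linarith
    -- Step 2: p i = ∂L/∂vⁱ
    have hp : ∀ i, p i = fderiv ℝ L (t, x, v) (0, 0, Pi.single i 1) := by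
      intro j
      have h := h1 0 0 (Pi.single j 1) 0 0 (by intro r; simp)
      simp [Pi.single_apply, mul_ite, Finset.sum_ite_eq'] at h
      linarith
    -- Step 3: span argument
    set f : Fin m → (ℝ × (Fin n → ℝ)) →ₗ[ℝ] ℝ :=
      fun r => lfAux (A r (t, x, v)) (B r (t, x, v)) with hf
    set K : (ℝ × (Fin n → ℝ)) →ₗ[ℝ] ℝ :=
      lfAux (fun i => -(dp i) + fderiv ℝ L (t, x, v) (0, Pi.single i 1, 0))
        (-dP + fderiv ℝ L (t, x, v) (1, 0, 0)) with hK
    have hker : ⨅ r, LinearMap.ker (f r) ≤ LinearMap.ker K := by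
      intro z hz
      simp only [Submodule.mem_iInf, LinearMap.mem_ker] at hz ⊢
      have hz' : ∀ r, ∑ i, A r (t, x, v) i * z.2 i + B r (t, x, v) * z.1 = 0 := by
        intro r
        have h := hz r
        rw [hf] at h
        rw [lfAux_apply] at h
        linarith
      have h := h1 z.1 z.2 0 0 0 hz'
      have hps : ∀ i : Fin n,
          (fderiv ℝ L (t, x, v) (0, 0, Pi.single i 1) - p i) = 0 :=
        fun i => by rw [hp i]; ring
      simp only [hK, lfAux_apply]
      simp only [hps, Pi.zero_apply, mul_zero, zero_mul, Finset.sum_const_zero,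
        add_zero] at h
      linarith
    obtain ⟨c, hc⟩ := (Submodule.mem_span_range_iff_exists_fun ℝ).1 (mem_span_of_iInf_ker_le_ker hker)
    refine ⟨fun r => -c r, hdx, hp, ?_, ?_, ?_⟩
    · intro j
      have h := congrArg (fun g => g ((0 : ℝ), (Pi.single j 1 : Fin n → ℝ))) hc
      simp only [LinearMap.coe_sum, Finset.sum_apply, LinearMap.smul_apply,
        smul_eq_mul, hf, hK, lfAux_apply] at h
      simp [Pi.single_apply, mul_ite, Finset.sum_ite_eq'] at h
      have hs : ∑ r, -c r * A r (t, x, v) j = -∑ r, c r * A r (t, x, v) j := by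
        rw [← Finset.sum_neg_distrib]
        exact Finset.sum_congr rfl fun r _ => by ring
      rw [hs, h]; ring
    · have h := congrArg (fun g => g ((1 : ℝ), (0 : Fin n → ℝ))) hc
      simp only [LinearMap.coe_sum, Finset.sum_apply, LinearMap.smul_apply,
        smul_eq_mul, hf, hK, lfAux_apply] at h
      simp at h
      have hs : ∑ r, -c r * B r (t, x, v) = -∑ r, c r * B r (t, x, v) := by
        rw [← Finset.sum_neg_distrib]
        exact Finset.sum_congr rfl fun r _ => by ring
      rw [hs, h]
      have : ((1 : ℝ), ((0 : Fin n → ℝ), (0 : Fin n → ℝ)))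
          = ((1 : ℝ), (0 : (Fin n → ℝ) × (Fin n → ℝ))) := rfl
      rw [this]; ring
    · intro r; have h := h2 r; linarith
  · rintro ⟨lam, hdx, hp, hAx, hB, hcon⟩
    constructor
    · intro wt wx wv wp wP hw
      have s1 : (∑ i, (-(dp i) + fderiv ℝ L (t, x, v) (0, Pi.single i 1, 0)) * wx i)
          = ∑ i, (-∑ r, lam r * A r (t, x, v) i) * wx i :=
        Finset.sum_congr rfl fun i _ => by
          have h := hAx i
          have h' : -(dp i) + fderiv ℝ L (t, x, v) (0, Pi.single i 1, 0)
              = -∑ r, lam r * A r (t, x, v) i := by linarith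
          rw [h']
      have s2 : (∑ i, (fderiv ℝ L (t, x, v) (0, 0, Pi.single i 1) - p i) * wv i)
          = 0 := by
        refine Finset.sum_eq_zero fun i _ => ?_
        rw [hp i]; ring
      have s3 : (∑ i, (dx i - v i) * wp i) = 0 := by
        refine Finset.sum_eq_zero fun i _ => ?_
        rw [hdx]; ring
      have e2 : -dP + fderiv ℝ L (t, x, v) (1, 0, 0)
          = -∑ r, lam r * B r (t, x, v) := by linarith [hB]
      rw [s1, s2, s3, e2, zero_mul, add_zero, add_zero, add_zero]
      have hz : ∀ r, lam r * (∑ i, A r (t, x, v) i * wx i + B r (t, x, v) * wt) = 0 :=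
        fun r => by rw [hw r, mul_zero]
      have h2 : ∑ r, lam r * (∑ i, A r (t, x, v) i * wx i + B r (t, x, v) * wt) = 0 := by
        simp [hz]
      simp only [mul_add, Finset.mul_sum, Finset.sum_add_distrib] at h2
      simp only [neg_mul, Finset.sum_mul, Finset.sum_neg_distrib]
      rw [Finset.sum_comm (f := fun (i : Fin n) (r : Fin m) => lam r * A r (t, x, v) i * wx i)]
      have e5 : ∑ r, ∑ i, lam r * A r (t, x, v) i * wx i
          = ∑ r, ∑ i, lam r * (A r (t, x, v) i * wx i) :=
        Finset.sum_congr rfl fun r _ => Finset.sum_congr rfl fun i _ => by ring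
      have e6 : ∑ r, lam r * B r (t, x, v) * wt = ∑ r, lam r * (B r (t, x, v) * wt) :=
        Finset.sum_congr rfl fun r _ => by ring
      rw [e5, e6]
      linarith
    · intro r; have h := hcon r; linarith
end

section
/- Along any solution section 𝗑(t) = (t, x(t), v(t), 𝗉(t), p(t)) of the equations ẋ = v, pᵢ = ∂L/∂vⁱ(t,x,v), ṗᵢ - ∂L/∂xⁱ = Σ_r λ_r A^r_i(t,x,v), 𝗉̇ - ∂L/∂t = Σ_r λ_r B^r(t,x,v), and Σᵢ A^r_i ẋⁱ + B^r = 0, the covariant generalized energy ℰ(t,x,v,𝗉,p) = 𝗉 + ⟨p,v⟩ - L(t,x,v) is constant: d/dt ℰ(t, x(t), v(t), 𝗉(t), p(t)) = 0. -/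
open scoped BigOperators

/-- Conservation of the covariant generalized energy `ℰ = 𝗉 + ⟨p,v⟩ - L(t,x,v)`
along any solution section of the time-dependent Dirac system equations. -/
theorem stmt_7 {n m : ℕ}
    (L : ℝ × (Fin n → ℝ) × (Fin n → ℝ) → ℝ) (hL : ContDiff ℝ (⊤ : ℕ∞) L)
    (A : Fin m → (ℝ × (Fin n → ℝ) × (Fin n → ℝ)) → Fin n → ℝ)
    (B : Fin m → (ℝ × (Fin n → ℝ) × (Fin n → ℝ)) → ℝ)
    (x v p : ℝ → Fin n → ℝ) (P : ℝ → ℝ) (lam : ℝ → Fin m → ℝ)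
    (dv dp : ℝ → Fin n → ℝ) (dP : ℝ → ℝ)
    (hx : ∀ t i, HasDerivAt (fun s => x s i) (v t i) t)
    (hvdiff : ∀ t i, HasDerivAt (fun s => v s i) (dv t i) t)
    (hpdiff : ∀ t i, HasDerivAt (fun s => p s i) (dp t i) t)
    (hPdiff : ∀ t, HasDerivAt P (dP t) t)
    (hleg : ∀ t i, p t i = fderiv ℝ L (t, x t, v t) (0, 0, Pi.single i 1))
    (hLdA : ∀ t i, dp t i - fderiv ℝ L (t, x t, v t) (0, Pi.single i 1, 0)
      = ∑ r, lam t r * A r (t, x t, v t) i)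
    (hP : ∀ t, dP t - fderiv ℝ L (t, x t, v t) (1, 0, 0)
      = ∑ r, lam t r * B r (t, x t, v t))
    (hkin : ∀ t r, ∑ i, A r (t, x t, v t) i * v t i + B r (t, x t, v t) = 0) :
    ∀ t, HasDerivAt
      (fun s => P s + (∑ i, p s i * v s i) - L (s, x s, v s)) 0 t := by
  intro t
  set f := fderiv ℝ L (t, x t, v t) with hf
  have hcurve : HasDerivAt (fun s => (s, x s, v s)) ((1 : ℝ), v t, dv t) t :=
    (hasDerivAt_id t).prodMk ((hasDerivAt_pi.2 (hx t)).prodMk (hasDerivAt_pi.2 (hvdiff t)))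
  have hLc : HasDerivAt (fun s => L (s, x s, v s)) (f (1, v t, dv t)) t :=
    (hL.differentiable (by simp) (t, x t, v t)).hasFDerivAt.comp_hasDerivAt t hcurve
  have hsum : HasDerivAt (fun s => ∑ i, p s i * v s i)
      (∑ i, (dp t i * v t i + p t i * dv t i)) t :=
    HasDerivAt.fun_sum fun i _ => (hpdiff t i).mul (hvdiff t i)
  have hD : HasDerivAt (fun s => P s + (∑ i, p s i * v s i) - L (s, x s, v s))
      (dP t + (∑ i, (dp t i * v t i + p t i * dv t i)) - f (1, v t, dv t)) t :=
    ((hPdiff t).add hsum).sub hLc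
  have hdecomp : ((1:ℝ), v t, dv t) = ((1:ℝ), (0 : Fin n → ℝ), (0 : Fin n → ℝ))
      + (∑ i, v t i • (((0:ℝ), Pi.single i (1:ℝ), 0) : ℝ × (Fin n → ℝ) × (Fin n → ℝ)))
      + (∑ i, dv t i • (((0:ℝ), 0, Pi.single i (1:ℝ)) : ℝ × (Fin n → ℝ) × (Fin n → ℝ))) := by
    refine Prod.ext ?_ (Prod.ext ?_ ?_) <;>
      simp [Prod.fst_sum, Prod.snd_sum, Finset.sum_apply] <;>
      funext j <;>
      simp [Finset.sum_apply, Pi.single_apply, mul_ite, Finset.sum_ite_eq']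
  have hfval : f (1, v t, dv t) = f (1, 0, 0)
      + ∑ i, v t i * f (0, Pi.single i 1, 0)
      + ∑ i, dv t i * f (0, 0, Pi.single i 1) := by
    rw [hdecomp, map_add, map_add, map_sum, map_sum]
    simp only [map_smul, smul_eq_mul]
  have key : dP t + (∑ i, (dp t i * v t i + p t i * dv t i)) - f (1, v t, dv t) = 0 := by
    rw [hfval]
    have hdp : ∀ i, dp t i = f (0, Pi.single i 1, 0) + ∑ r, lam t r * A r (t, x t, v t) i := by
      intro i; have := hLdA t i; linarith
    have hdP2 : dP t = f (1, 0, 0) + ∑ r, lam t r * B r (t, x t, v t) := by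
      have := hP t; linarith
    have hp2 : ∀ i, p t i = f (0, 0, Pi.single i 1) := hleg t
    have hcomm : ∑ i, (∑ r, lam t r * A r (t, x t, v t) i) * v t i
        = ∑ r, lam t r * (∑ i, A r (t, x t, v t) i * v t i) := by
      simp_rw [Finset.sum_mul, Finset.mul_sum, mul_assoc]
      exact Finset.sum_comm
    have hzero : ∑ r, lam t r * B r (t, x t, v t)
        + ∑ r, lam t r * (∑ i, A r (t, x t, v t) i * v t i) = 0 := by
      rw [← Finset.sum_add_distrib]
      refine Finset.sum_eq_zero fun r _ => ?_
      have h := hkin t r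
      linear_combination lam t r * h
    have e1 : ∑ i, (dp t i * v t i + p t i * dv t i)
        = ∑ i, v t i * f (0, Pi.single i 1, 0)
          + ∑ i, dv t i * f (0, 0, Pi.single i 1)
          + ∑ r, lam t r * (∑ i, A r (t, x t, v t) i * v t i) := by
      rw [← hcomm, ← Finset.sum_add_distrib, ← Finset.sum_add_distrib]
      refine Finset.sum_congr rfl fun i _ => ?_
      rw [hdp i, hp2 i]; ring
    rw [e1, hdP2]
    linarith [hzero]
  rw [← key]; exact hD
end
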